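/- If G = (S, 𝓕) is a local forest greedoid with rank function r, then the linear system { x(U) ≥ r(S) − r(S \ U) for all U ⊆ S } is totally dual integral: for every integer weight vector c ∈ ℤ^S for which min{ Σ_{s∈S} c(s)x(s) : x satisfies the system } is finite, the dual program max{ Σ_{U⊆S} y(U)(r(S) − r(S \ U)) : Σ{y(U) : s ∈ U} = c(s) for all s ∈ S, y ≥ 0 } has an integer optimal solution. -/

import Mathlib

/-!
Negative weights make the primal unbounded, so `c` may be taken with values in `ℕ`. Weigh each
element `z` of a feasible set `B` by the weight `d z` of its path in `B`. Growing a basis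
greedily, always adding a continuation whose path is lightest, gives a basis `B` such that every
sublevel `{z ∈ B | d z < t}` is feasible and all its continuations have path weight at least `t`
(local union and intersection properties). The shadow vector of `B` is primal feasible with value
`∑ z ∈ B, d z`. For the dual, every element `s` is put into the sets `U t` for `c s` consecutive
levels `t` ending at the last level at which `s` continues the sublevel. By the local forest
property, a path minus its endpoint is again a path, so a continuation of the `t`-sublevel has
path weight below `t + c s`; hence every continuation of the `t`-sublevel lies in `U t`, so
`r(S) - r(S \ U t) = |B| - |sublevel t|`, and summing over `t` gives `∑ z ∈ B, d z` again.
-/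

open Finset

variable {α : Type*} [DecidableEq α] [Fintype α]

/-- `X` is subfeasible: contained in some feasible set. -/
def Subfeasible (F : Set (Finset α)) (X : Finset α) : Prop :=
  ∃ Y ∈ F, X ⊆ Y

/-- Greedoid axioms: `∅` is feasible, and the exchange property. -/
def IsGreedoid (F : Set (Finset α)) : Prop :=
  (∅ : Finset α) ∈ F ∧
    ∀ X ∈ F, ∀ Y ∈ F, X.card < Y.card → ∃ y ∈ Y, y ∉ X ∧ insert y X ∈ F

/-- Local union property. -/
def LocalUnion (F : Set (Finset α)) : Prop :=
  ∀ A ∈ F, ∀ B ∈ F, Subfeasible F (A ∪ B) → A ∪ B ∈ F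

/-- Local intersection property. -/
def LocalInter (F : Set (Finset α)) : Prop :=
  ∀ A ∈ F, ∀ B ∈ F, Subfeasible F (A ∪ B) → A ∩ B ∈ F

/-- Local forest property. -/
def LocalForest (F : Set (Finset α)) : Prop :=
  ∀ A ∈ F, ∀ x y z : α,
    insert x A ∈ F → insert y A ∈ F → insert x (insert y A) ∈ F →
      insert z (insert x (insert y A)) ∈ F →
      insert z (insert x A) ∈ F ∨ insert z (insert y A) ∈ F

/-- The rank function of a greedoid: max cardinality of a feasible subset. -/
noncomputable def grank (F : Set (Finset α)) (A : Finset α) : ℕ :=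
  sSup {n : ℕ | ∃ X ∈ F, X ⊆ A ∧ X.card = n}

/-- A base: a feasible set of maximum size. -/
def IsBase (F : Set (Finset α)) (B : Finset α) : Prop :=
  B ∈ F ∧ ∀ C ∈ F, C.card ≤ B.card

/-- The set of continuations of a feasible set `A`. -/
def Gamma (F : Set (Finset α)) (A : Finset α) : Set α :=
  {x | x ∉ A ∧ insert x A ∈ F}

/-- `P` is the `x`-path in `A`: the unique inclusion-minimal feasible subset
of `A` containing `x`. -/
def IsPathIn (F : Set (Finset α)) (A : Finset α) (x : α) (P : Finset α) : Prop :=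
  P ∈ F ∧ P ⊆ A ∧ x ∈ P ∧ ∀ Q ∈ F, Q ⊆ A → x ∈ Q → P ⊆ Q

/-- `P` is a path. -/
def IsPath (F : Set (Finset α)) (P : Finset α) : Prop :=
  ∃ A ∈ F, ∃ x ∈ A, IsPathIn F A x P

/-- `l` is a feasible ordering (of the set of its elements): every prefix is feasible. -/
def FeasibleOrdering (F : Set (Finset α)) (l : List α) : Prop :=
  l.Nodup ∧ ∀ i : ℕ, (l.take i).toFinset ∈ F

/-- `B` is a greedy base for maximizing `w`. -/
def GreedyMaxBase (F : Set (Finset α)) (w : Finset α → ℝ) (B : Finset α) : Prop :=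
  IsBase F B ∧ ∃ l : List α, FeasibleOrdering F l ∧ l.toFinset = B ∧
    ∀ (i : ℕ) (hi : i < l.length), ∀ y ∈ Gamma F (l.take i).toFinset,
      w (insert y (l.take i).toFinset) ≤ w (insert (l.get ⟨i, hi⟩) (l.take i).toFinset)

/-- `B` is a greedy base for minimizing `w`. -/
def GreedyMinBase (F : Set (Finset α)) (w : Finset α → ℝ) (B : Finset α) : Prop :=
  IsBase F B ∧ ∃ l : List α, FeasibleOrdering F l ∧ l.toFinset = B ∧
    ∀ (i : ℕ) (hi : i < l.length), ∀ y ∈ Gamma F (l.take i).toFinset,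
      w (insert (l.get ⟨i, hi⟩) (l.take i).toFinset) ≤ w (insert y (l.take i).toFinset)

/-- The shadow vector of a feasible set `B`: `sh_B(x) = |B| - r(B \ {x})`. -/
noncomputable def shVec (F : Set (Finset α)) (B : Finset α) : α → ℝ :=
  fun x => (B.card : ℝ) - (grank F (B.erase x) : ℝ)

section Rank

variable {β : Type*} {F : Set (Finset β)}

lemma bddAbove_card_feasible_subset (A : Finset β) :
    BddAbove {n : ℕ | ∃ X ∈ F, X ⊆ A ∧ X.card = n} :=
  ⟨A.card, by rintro n ⟨X, -, hXA, rfl⟩; exact card_le_card hXA⟩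

lemma card_le_grank {X A : Finset β} (hX : X ∈ F) (hXA : X ⊆ A) : X.card ≤ grank F A :=
  le_csSup (bddAbove_card_feasible_subset A) ⟨X, hX, hXA, rfl⟩

lemma exists_feasible_card_eq_grank (hF : ∅ ∈ F) (A : Finset β) :
    ∃ X ∈ F, X ⊆ A ∧ X.card = grank F A :=
  Nat.sSup_mem (s := {n | ∃ X ∈ F, X ⊆ A ∧ X.card = n}) ⟨0, ∅, hF, empty_subset A, rfl⟩
    (bddAbove_card_feasible_subset A)

lemma grank_mono (hF : ∅ ∈ F) {A B : Finset β} (hAB : A ⊆ B) : grank F A ≤ grank F B := by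
  obtain ⟨X, hX, hXA, hcard⟩ := exists_feasible_card_eq_grank hF A
  exact hcard ▸ card_le_grank hX (hXA.trans hAB)

end Rank

lemma IsPathIn.eq {β : Type*} {F : Set (Finset β)} {A P Q : Finset β} {x : β}
    (hP : IsPathIn F A x P) (hQ : IsPathIn F A x Q) : P = Q :=
  subset_antisymm (hP.2.2.2 Q hQ.1 hQ.2.1 hQ.2.2.1) (hQ.2.2.2 P hP.1 hP.2.1 hP.2.2.1)

namespace IsGreedoid

variable {β : Type*} [DecidableEq β] {F : Set (Finset β)}

lemma exists_feasible_between (hG : IsGreedoid F) {X Y : Finset β} (hX : X ∈ F) (hY : Y ∈ F)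
    (hXY : X ⊆ Y) {k : ℕ} (hXk : X.card ≤ k) (hkY : k ≤ Y.card) :
    ∃ Z ∈ F, X ⊆ Z ∧ Z ⊆ Y ∧ Z.card = k := by
  induction k, hXk using Nat.le_induction with
  | base => exact ⟨X, hX, Subset.rfl, hXY, rfl⟩
  | succ k _ ih =>
    obtain ⟨Z, hZ, hXZ, hZY, rfl⟩ := ih (by omega)
    obtain ⟨y, hyY, hyZ, hyZF⟩ := hG.2 Z hZ Y hY (by omega)
    exact ⟨insert y Z, hyZF, hXZ.trans (subset_insert y Z), insert_subset hyY hZY,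
      card_insert_of_notMem hyZ⟩

lemma exists_erase_mem (hG : IsGreedoid F) {X Y : Finset β} (hX : X ∈ F) (hY : Y ∈ F)
    (hXY : X ⊂ Y) : ∃ m ∈ Y, m ∉ X ∧ Y.erase m ∈ F := by
  have hlt := card_lt_card hXY
  obtain ⟨Z, hZ, hXZ, hZY, hZcard⟩ :=
    hG.exists_feasible_between hX hY hXY.subset (k := Y.card - 1) (by omega) (by omega)
  obtain ⟨m, hmZ, rfl⟩ := exists_eq_insert_iff.2 ⟨hZY, by omega⟩
  exact ⟨m, mem_insert_self m Z, fun h => hmZ (hXZ h), by rwa [erase_insert hmZ]⟩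

lemma grank_eq_card (hG : IsGreedoid F) {X Y : Finset β} (hX : X ∈ F) (hXY : X ⊆ Y)
    (hmax : ∀ q ∈ Y, q ∉ X → insert q X ∉ F) : grank F Y = X.card := by
  refine le_antisymm ?_ (card_le_grank hX hXY)
  obtain ⟨Z, hZ, hZY, hcard⟩ := exists_feasible_card_eq_grank hG.1 Y
  by_contra! h
  obtain ⟨q, hqZ, hqX, hq⟩ := hG.2 X hX Z hZ (hcard ▸ h)
  exact hmax q (hZY hqZ) hqX hq

end IsGreedoid

lemma LocalForest.insert_erase_mem {β : Type*} [DecidableEq β] {F : Set (Finset β)}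
    (hI : LocalInter F) (hLF : LocalForest F) {P : Finset β} {x y q : β} (hP : P ∈ F)
    (hx : x ∈ P) (hy : y ∈ P) (hxy : x ≠ y) (hPx : P.erase x ∈ F) (hPy : P.erase y ∈ F)
    (hqP : insert q P ∈ F) : insert q (P.erase x) ∈ F ∨ insert q (P.erase y) ∈ F := by
  set A := (P.erase y).erase x
  have hA : A ∈ F := by
    have := hI _ hPx _ hPy ⟨P, hP, union_subset (erase_subset x P) (erase_subset y P)⟩
    rwa [erase_inter, inter_eq_right.2 (erase_subset y P)] at this
  have hxA : insert x A = P.erase y := insert_erase (mem_erase.2 ⟨hxy, hx⟩)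
  have hyA : insert y A = P.erase x := by
    rw [show A = (P.erase x).erase y from erase_right_comm]
    exact insert_erase (mem_erase.2 ⟨hxy.symm, hy⟩)
  have hxyA : insert x (insert y A) = P := by rw [hyA, insert_erase hx]
  have := hLF A hA x y q (hxA ▸ hPy) (hyA ▸ hPx) (hxyA ▸ hP) (hxyA ▸ hqP)
  rwa [hxA, hyA, or_comm] at this

section Path

variable {β : Type*} [DecidableEq β] {F : Set (Finset β)} {A B P : Finset β} {x : β}

lemma exists_isPathIn (hI : LocalInter F) (hA : A ∈ F) (hx : x ∈ A) :
    ∃ P, IsPathIn F A x P := by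
  classical
  obtain ⟨P, hP, hPmin⟩ :=
    exists_min_image {Q ∈ A.powerset | Q ∈ F ∧ x ∈ Q} card ⟨A, by simp [hA, hx]⟩
  simp only [mem_filter, mem_powerset] at hP
  obtain ⟨hPA, hPF, hxP⟩ := hP
  refine ⟨P, hPF, hPA, hxP, fun Q hQ hQA hxQ => inter_eq_left.1 ?_⟩
  have hPQ : P ∩ Q ∈ F := hI P hPF Q hQ ⟨A, hA, union_subset hPA hQA⟩
  exact eq_of_subset_of_card_le inter_subset_left
    (hPmin _ (by simp [inter_subset_left.trans hPA, hPQ, hxP, hxQ]))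

variable (F) in
open Classical in
noncomputable def pathIn (A : Finset β) (x : β) : Finset β :=
  if h : ∃ P, IsPathIn F A x P then h.choose else ∅

lemma isPathIn_pathIn (hI : LocalInter F) (hA : A ∈ F) (hx : x ∈ A) :
    IsPathIn F A x (pathIn F A x) := by
  have h := exists_isPathIn hI hA hx
  rw [pathIn, dif_pos h]
  exact h.choose_spec

lemma pathIn_mem (hI : LocalInter F) (hA : A ∈ F) (hx : x ∈ A) : pathIn F A x ∈ F :=
  (isPathIn_pathIn hI hA hx).1

lemma pathIn_subset (hI : LocalInter F) (hA : A ∈ F) (hx : x ∈ A) : pathIn F A x ⊆ A :=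
  (isPathIn_pathIn hI hA hx).2.1

lemma mem_pathIn (hI : LocalInter F) (hA : A ∈ F) (hx : x ∈ A) : x ∈ pathIn F A x :=
  (isPathIn_pathIn hI hA hx).2.2.1

lemma pathIn_subset_of_mem (hI : LocalInter F) (hA : A ∈ F) {Q : Finset β} (hQ : Q ∈ F)
    (hQA : Q ⊆ A) (hxQ : x ∈ Q) : pathIn F A x ⊆ Q :=
  (isPathIn_pathIn hI hA (hQA hxQ)).2.2.2 Q hQ hQA hxQ

lemma IsPathIn.pathIn_eq (hI : LocalInter F) (hA : A ∈ F) (h : IsPathIn F A x P) :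
    pathIn F A x = P :=
  (isPathIn_pathIn hI hA (h.2.1 h.2.2.1)).eq h

lemma pathIn_subset_pathIn (hI : LocalInter F) (hA : A ∈ F) (hB : B ∈ F) (hAB : A ⊆ B)
    (hx : x ∈ A) : pathIn F B x ⊆ pathIn F A x :=
  pathIn_subset_of_mem hI hB (pathIn_mem hI hA hx) ((pathIn_subset hI hA hx).trans hAB)
    (mem_pathIn hI hA hx)

lemma pathIn_eq_of_subset (hI : LocalInter F) (hA : A ∈ F) (hB : B ∈ F) (hAB : A ⊆ B)
    (hx : x ∈ A) : pathIn F B x = pathIn F A x :=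
  subset_antisymm (pathIn_subset_pathIn hI hA hB hAB hx)
    (pathIn_subset_of_mem hI hA (pathIn_mem hI hB (hAB hx))
      (pathIn_subset_of_mem hI hB hA hAB hx) (mem_pathIn hI hB (hAB hx)))

lemma biUnion_pathIn_mem (hU : LocalUnion F) (hI : LocalInter F) (hF : ∅ ∈ F) (hA : A ∈ F)
    {s : Finset β} (hsA : s ⊆ A) : s.biUnion (pathIn F A) ∈ F := by
  induction s using Finset.induction_on with
  | empty => simpa using hF
  | insert a s _ ih =>
    rw [insert_subset_iff] at hsA
    rw [biUnion_insert]
    refine hU _ (pathIn_mem hI hA hsA.1) _ (ih hsA.2) ⟨A, hA, union_subset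
      (pathIn_subset hI hA hsA.1) (biUnion_subset.2 fun z hz => pathIn_subset hI hA (hsA.2 hz))⟩

lemma grank_sdiff_eq_card (hG : IsGreedoid F) (hU : LocalUnion F) (hI : LocalInter F)
    (hA : A ∈ F) (V : Finset β) :
    grank F (A \ V) = #{z ∈ A | Disjoint (pathIn F A z) V} := by
  apply le_antisymm
  · obtain ⟨X, hX, hXV, hcard⟩ := exists_feasible_card_eq_grank hG.1 (A \ V)
    have hXA : X ⊆ A := hXV.trans sdiff_subset
    refine hcard ▸ card_le_card fun z hz => mem_filter.2 ⟨hXA hz, ?_⟩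
    exact disjoint_left.2 fun u hu =>
      (mem_sdiff.1 (hXV (pathIn_subset_of_mem hI hA hX hXA hz hu))).2
  · set s := {z ∈ A | Disjoint (pathIn F A z) V}
    have hsA : s ⊆ A := filter_subset _ A
    refine (card_le_card fun z hz => mem_biUnion.2 ⟨z, hz, mem_pathIn hI hA (hsA hz)⟩).trans
      (card_le_grank (biUnion_pathIn_mem hU hI hG.1 hA hsA)
        (biUnion_subset.2 fun z hz u hu => ?_))
    exact mem_sdiff.2 ⟨pathIn_subset hI hA (hsA hz) hu,
      disjoint_left.1 (mem_filter.1 hz).2 hu⟩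

lemma IsPathIn.erase_mem (hG : IsGreedoid F) (h : IsPathIn F A x P) : P.erase x ∈ F := by
  obtain ⟨hP, hPA, hxP, hmin⟩ := h
  obtain ⟨m, hmP, -, hm⟩ := hG.exists_erase_mem hG.1 hP (empty_ssubset.2 ⟨x, hxP⟩)
  obtain rfl | hmx := eq_or_ne m x
  · exact hm
  · exact absurd (hmin _ hm ((erase_subset m P).trans hPA) (mem_erase.2 ⟨hmx.symm, hxP⟩) hmP)
      (notMem_erase m P)

/-- This is where the local forest property enters: a path minus its endpoint `x` has a unique
last element. -/
lemma IsPathIn.eq_of_erase_erase_mem (hG : IsGreedoid F) (hI : LocalInter F)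
    (hLF : LocalForest F) (h : IsPathIn F A x P) {y z : β} (hy : y ∈ P.erase x)
    (hz : z ∈ P.erase x) (hPy : (P.erase x).erase y ∈ F) (hPz : (P.erase x).erase z ∈ F) :
    y = z := by
  by_contra hyz
  have hPA : insert x (P.erase x) ⊆ A := by rw [insert_erase h.2.2.1]; exact h.2.1
  have hxP : insert x (P.erase x) ∈ F := by rw [insert_erase h.2.2.1]; exact h.1
  have key : ∀ w ∈ P.erase x, insert x ((P.erase x).erase w) ∈ F → False := fun w hw hwF =>
    have hsub := h.2.2.2 _ hwF ((insert_subset_insert x (erase_subset _ _)).trans hPA)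
      (mem_insert_self x _)
    have hwx : w ≠ x := (mem_erase.1 hw).1
    by simpa [hwx] using hsub (mem_of_mem_erase hw)
  rcases LocalForest.insert_erase_mem hI hLF (h.erase_mem hG) hy hz hyz hPy hPz hxP with h' | h'
  · exact key y hy h'
  · exact key z hz h'

lemma IsPathIn.erase_eq_empty_or (hG : IsGreedoid F) (hI : LocalInter F) (hLF : LocalForest F)
    {A' : Finset β} (h : IsPathIn F A' x P) (hA : A ∈ F) (hPA : P.erase x ⊆ A) :
    P.erase x = ∅ ∨ ∃ w, IsPathIn F A w (P.erase x) := by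
  set P' := P.erase x
  have hP' : P' ∈ F := h.erase_mem hG
  rcases P'.eq_empty_or_nonempty with hP'e | hP'ne
  · exact Or.inl hP'e
  obtain ⟨w, hw, -, hPw⟩ := hG.exists_erase_mem hG.1 hP' (empty_ssubset.2 hP'ne)
  refine Or.inr ⟨w, hP', hPA, hw, fun Q hQ hQA hwQ => ?_⟩
  by_contra hP'Q
  have hssub : P' ∩ Q ⊂ P' :=
    inter_subset_left.ssubset_of_ne fun heq => hP'Q (inter_eq_left.1 heq)
  obtain ⟨m, hm, hmQ, hPm⟩ :=
    hG.exists_erase_mem (hI _ hP' _ hQ ⟨A, hA, union_subset hPA hQA⟩) hP' hssub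
  obtain rfl := h.eq_of_erase_erase_mem hG hI hLF hm hw hPm hPw
  exact hmQ (mem_inter.2 ⟨hm, hwQ⟩)

lemma shVec_eq_card (hG : IsGreedoid F) (hU : LocalUnion F) (hI : LocalInter F) (hB : B ∈ F)
    (s : β) : shVec F B s = #{z ∈ B | s ∈ pathIn F B z} := by
  have hsplit := card_filter_add_card_filter_not (s := B) (s ∈ pathIn F B ·)
  have hrank : grank F (B.erase s) = #{z ∈ B | s ∉ pathIn F B z} := by
    simp [erase_eq, grank_sdiff_eq_card hG hU hI hB]
  rw [shVec, hrank, ← hsplit]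
  push_cast
  ring

end Path

section PathWeight

variable {β : Type*} [DecidableEq β] {F : Set (Finset β)} {c : β → ℕ} {A B : Finset β}
  {q : β} {m t : ℕ}

variable (F) in
noncomputable def pathWeight (c : β → ℕ) (A : Finset β) (x : β) : ℕ :=
  ∑ s ∈ pathIn F A x, c s

lemma pathWeight_insert_lt (hG : IsGreedoid F) (hI : LocalInter F) (hLF : LocalForest F)
    (hA : A ∈ F) (hqA : insert q A ∈ F) (ht : 0 < t)
    (hAt : ∀ w ∈ A, pathWeight F c A w < t) :
    pathWeight F c (insert q A) q < t + c q := by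
  have hP := isPathIn_pathIn hI hqA (mem_insert_self q A)
  have hPA : (pathIn F (insert q A) q).erase q ⊆ A := subset_insert_iff.1 hP.2.1
  rw [pathWeight, ← add_sum_erase _ _ hP.2.2.1]
  rcases hP.erase_eq_empty_or hG hI hLF hA hPA with he | ⟨w, hw⟩
  · rw [he, sum_empty]
    omega
  · rw [← hw.pathIn_eq hI hA]
    have := hAt w (hw.2.1 hw.2.2.1)
    rw [pathWeight] at this
    omega

variable (F) in
def IsContinuationBound (c : β → ℕ) (A : Finset β) (m : ℕ) : Prop :=
  ∀ q ∉ A, insert q A ∈ F → m ≤ pathWeight F c (insert q A) q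

/-- The path of a continuation `b` of `insert q A` either runs through `q`, and then contains
the path of `q`, or avoids it, and then `b` is already a continuation of `A`. -/
lemma isContinuationBound_insert (hG : IsGreedoid F) (hU : LocalUnion F) (hI : LocalInter F)
    (hA : A ∈ F) (hm : IsContinuationBound F c A m) (hq : q ∉ A) (hqA : insert q A ∈ F) :
    IsContinuationBound F c (insert q A) m := by
  intro b hb hbF
  have hR := isPathIn_pathIn hI hbF (mem_insert_self b _)
  set R := pathIn F (insert b (insert q A)) b
  have hbq : b ≠ q := fun h => hb (h ▸ mem_insert_self q A)
  by_cases hqR : q ∈ R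
  · have hRq : pathIn F (insert q A) q ⊆ R.erase b :=
      pathIn_subset_of_mem hI hqA (hR.erase_mem hG) (subset_insert_iff.1 hR.2.1)
        (mem_erase.2 ⟨hbq.symm, hqR⟩)
    exact (hm q hq hqA).trans (sum_le_sum_of_subset (hRq.trans (erase_subset b R)))
  · have hRbA : R ⊆ insert b A := fun u hu => by
      rcases mem_insert.1 (hR.2.1 hu) with rfl | hu'
      · exact mem_insert_self u A
      · rcases mem_insert.1 hu' with rfl | hu''
        · exact absurd hu hqR
        · exact mem_insert_of_mem hu''
    have hbA : insert b A ∈ F := by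
      have hAR : A ∪ R = insert b A := subset_antisymm (union_subset (subset_insert b A) hRbA)
        (insert_subset (mem_union_right A hR.2.2.1) subset_union_left)
      rw [← hAR]
      refine hU A hA R hR.1 ⟨insert b (insert q A), hbF, hAR ▸ ?_⟩
      exact insert_subset_insert b (subset_insert q A)
    exact (hm b (fun h => hb (mem_insert_of_mem h)) hbA).trans
      (sum_le_sum_of_subset (pathIn_subset_of_mem hI hbA hR.1 hRbA hR.2.2.1))

lemma IsContinuationBound.le_pathWeight (hG : IsGreedoid F) (hU : LocalUnion F)
    (hI : LocalInter F) (hA : A ∈ F) (hB : B ∈ F) (hAB : A ⊆ B)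
    (hm : IsContinuationBound F c A m) {z : β} (hzB : z ∈ B) (hzA : z ∉ A) :
    m ≤ pathWeight F c B z := by
  obtain ⟨n, hn⟩ : ∃ n, B.card - A.card = n := ⟨_, rfl⟩
  induction n generalizing A with
  | zero =>
    exact absurd (eq_of_subset_of_card_le hAB (by omega) ▸ hzB) hzA
  | succ n ih =>
    obtain ⟨y, hyB, hyA, hyAF⟩ := hG.2 A hA B hB (by omega)
    have hyAB : insert y A ⊆ B := insert_subset hyB hAB
    by_cases hzy : z = y
    · subst hzy
      rw [pathWeight, pathIn_eq_of_subset hI hyAF hB hyAB (mem_insert_self z A)]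
      exact hm z hyA hyAF
    · refine ih hyAF hyAB (isContinuationBound_insert hG hU hI hA hm hyA hyAF)
        (by simp [hzy, hzA]) ?_
      rw [card_insert_of_notMem hyA]
      omega

end PathWeight

section Greedy

variable {β : Type*} {F : Set (Finset β)} {c : β → ℕ} {B : Finset β} {z : β} {t : ℕ}

variable (F) in
noncomputable def sublevel (c : β → ℕ) (B : Finset β) (t : ℕ) : Finset β :=
  {z ∈ B | pathWeight F c B z < t}

lemma sublevel_mono {t t' : ℕ} (htt' : t ≤ t') : sublevel F c B t ⊆ sublevel F c B t' :=
  fun _ hz => mem_filter.2 ⟨(mem_filter.1 hz).1, (mem_filter.1 hz).2.trans_le htt'⟩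

variable [DecidableEq β]

variable (F) in
/-- What the greedy algorithm that always adds a continuation of minimum path weight produces. -/
structure IsGreedyBase (c : β → ℕ) (B : Finset β) : Prop where
  mem : B ∈ F
  maximal : ∀ q ∉ B, insert q B ∉ F
  sublevel_mem : ∀ t, sublevel F c B t ∈ F
  isContinuationBound : ∀ t, IsContinuationBound F c (sublevel F c B t) t

lemma IsGreedyBase.pathWeight_sublevel (hI : LocalInter F) (hB : IsGreedyBase F c B)
    (hz : z ∈ sublevel F c B t) : pathWeight F c (sublevel F c B t) z = pathWeight F c B z := by
  rw [pathWeight, pathWeight, pathIn_eq_of_subset hI (hB.sublevel_mem t) hB.mem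
    (filter_subset _ B) hz]

lemma exists_greedy_extension [Fintype β] (hG : IsGreedoid F) (hU : LocalUnion F)
    (hI : LocalInter F) (c : β → ℕ) {A : Finset β} (hA : A ∈ F) :
    ∃ B, A ⊆ B ∧ B ∈ F ∧ (∀ q ∉ B, insert q B ∉ F) ∧
      ∀ t, (∀ z ∈ A, pathWeight F c B z < t) →
        sublevel F c B t ∈ F ∧ IsContinuationBound F c (sublevel F c B t) t := by
  obtain ⟨n, hn⟩ : ∃ n, #(univ \ A) = n := ⟨_, rfl⟩
  induction n using Nat.strong_induction_on generalizing A with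
  | _ n ih =>
  by_cases hcont : ∃ q ∉ A, insert q A ∈ F
  swap
  · push Not at hcont
    refine ⟨A, Subset.rfl, hA, hcont, fun t ht => ?_⟩
    rw [sublevel, filter_true_of_mem ht]
    exact ⟨hA, fun q hq hqA => absurd hqA (hcont q hq)⟩
  classical
  obtain ⟨q, hq, hqmin⟩ := exists_min_image {q | q ∉ A ∧ insert q A ∈ F}
    (fun q => pathWeight F c (insert q A) q)
    (let ⟨q, hq, hqA⟩ := hcont; ⟨q, by simp [hq, hqA]⟩)
  simp only [mem_filter, mem_univ, true_and] at hq hqmin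
  have hlt : #(univ \ insert q A) < n := by
    refine hn ▸ card_lt_card ((ssubset_iff_of_subset ?_).2 ⟨q, by simp [hq.1]⟩)
    exact sdiff_subset_sdiff Subset.rfl (subset_insert q A)
  obtain ⟨B, hAB, hB, hmax, hlev⟩ := ih _ hlt hq.2 rfl
  refine ⟨B, (subset_insert q A).trans hAB, hB, hmax, fun t ht => ?_⟩
  by_cases hqt : pathWeight F c B q < t
  · exact hlev t (forall_mem_insert _ _ _ |>.2 ⟨hqt, ht⟩)
  -- The lightest continuation of `A` weighs at least `t`, so nothing added later falls below `t`.
  have hbound : IsContinuationBound F c A t := by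
    intro q' hq' hq'A
    rw [pathWeight, pathIn_eq_of_subset hI hq.2 hB hAB (mem_insert_self q A)] at hqt
    exact (not_lt.1 hqt).trans (hqmin q' ⟨hq', hq'A⟩)
  have hsub : sublevel F c B t = A := by
    ext z
    simp only [sublevel, mem_filter]
    refine ⟨fun ⟨hzB, hzt⟩ => ?_, fun hz => ⟨hAB (subset_insert q A hz), ht z hz⟩⟩
    by_contra hzA
    exact (hbound.le_pathWeight hG hU hI hA hB ((subset_insert q A).trans hAB) hzB hzA).not_gt
      hzt
  rw [hsub]
  exact ⟨hA, hbound⟩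

lemma exists_isGreedyBase [Fintype β] (hG : IsGreedoid F) (hU : LocalUnion F)
    (hI : LocalInter F) (c : β → ℕ) : ∃ B, IsGreedyBase F c B := by
  obtain ⟨B, -, hB, hmax, hlev⟩ := exists_greedy_extension hG hU hI c hG.1
  exact ⟨B, hB, hmax, fun t => (hlev t (by simp)).1, fun t => (hlev t (by simp)).2⟩

end Greedy

section Shadow

variable {β : Type*} [DecidableEq β] [Fintype β] {F : Set (Finset β)} {B : Finset β}

lemma card_sub_grank_le_sum_shVec (hG : IsGreedoid F) (hU : LocalUnion F) (hI : LocalInter F)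
    (hB : B ∈ F) (V : Finset β) :
    (B.card : ℝ) - grank F (univ \ V) ≤ ∑ s ∈ V, shVec F B s := by
  have hsplit := card_filter_add_card_filter_not (s := B) (fun z => Disjoint (pathIn F B z) V)
  have hdisj : #{z ∈ B | Disjoint (pathIn F B z) V} ≤ grank F (univ \ V) :=
    grank_sdiff_eq_card hG hU hI hB V ▸
      grank_mono hG.1 (sdiff_subset_sdiff (subset_univ B) le_rfl)
  have hmeet :
      #{z ∈ B | ¬Disjoint (pathIn F B z) V} ≤ ∑ s ∈ V, #{z ∈ B | s ∈ pathIn F B z} := by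
    refine (card_le_card fun z hz => ?_).trans card_biUnion_le
    obtain ⟨hzB, hzV⟩ := mem_filter.1 hz
    obtain ⟨s, hsP, hsV⟩ := not_disjoint_iff.1 hzV
    exact mem_biUnion.2 ⟨s, hsV, mem_filter.2 ⟨hzB, hsP⟩⟩
  have hcard : B.card ≤ grank F (univ \ V) + ∑ s ∈ V, #{z ∈ B | s ∈ pathIn F B z} := by
    omega
  simp only [shVec_eq_card hG hU hI hB]
  rw [sub_le_iff_le_add']
  exact_mod_cast hcard

lemma sum_mul_shVec (hG : IsGreedoid F) (hU : LocalUnion F) (hI : LocalInter F) (hB : B ∈ F)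
    (c : β → ℕ) : ∑ s, (c s : ℝ) * shVec F B s = ∑ z ∈ B, pathWeight F c B z := by
  simp only [shVec_eq_card hG hU hI hB, pathWeight]
  norm_cast
  simp only [mul_comm (c _), ← smul_eq_mul, ← sum_const]
  exact sum_comm' fun s z => by simp [and_comm]

end Shadow

lemma pathWeight_le_sum {β : Type*} [Fintype β] (F : Set (Finset β)) (c : β → ℕ)
    (A : Finset β) (x : β) :
    pathWeight F c A x ≤ ∑ s, c s :=
  sum_le_sum_of_subset (subset_univ _)

lemma sum_card_sub_card_sublevel {β : Type*} [Fintype β] {F : Set (Finset β)} {c : β → ℕ}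
    {B : Finset β} :
    ∑ t ∈ Icc 1 (∑ s, c s), ((B.card : ℝ) - #(sublevel F c B t)) =
      ∑ z ∈ B, pathWeight F c B z := by
  have hlevel :
      ∀ t, (B.card : ℝ) - #(sublevel F c B t) = #{z ∈ B | t ≤ pathWeight F c B z} := by
    intro t
    rw [← card_filter_add_card_filter_not (s := B) (fun z => pathWeight F c B z < t), sublevel]
    simp [not_lt]
  simp only [hlevel]
  norm_cast
  refine (sum_card_bipartiteAbove_eq_sum_card_bipartiteBelow
    (fun t z => t ≤ pathWeight F c B z)).trans (sum_congr rfl fun z _ => ?_)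
  have hz := pathWeight_le_sum F c B z
  rw [bipartiteBelow, show {t ∈ Icc 1 (∑ s, c s) | t ≤ pathWeight F c B z} =
    Icc 1 (pathWeight F c B z) by ext; simp only [mem_filter, mem_Icc]; omega]
  simp

section Dual

variable {β : Type*} [DecidableEq β] [Fintype β] {F : Set (Finset β)} {c : β → ℕ}
  {B : Finset β} {q z : β} {t : ℕ}

variable (F) in
open Classical in
noncomputable def intervalTop (c : β → ℕ) (B : Finset β) (s : β) : ℕ :=
  max (c s)
    ({t ∈ Icc 1 (∑ s, c s) | s ∉ sublevel F c B t ∧ insert s (sublevel F c B t) ∈ F}.sup id)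

variable (F) in
noncomputable def dualSet (c : β → ℕ) (B : Finset β) (t : ℕ) : Finset β :=
  {s | t ≤ intervalTop F c B s ∧ intervalTop F c B s < t + c s}

open Classical in
lemma intervalTop_le_sum (s : β) : intervalTop F c B s ≤ ∑ s, c s :=
  max_le (single_le_sum (fun _ _ => Nat.zero_le _) (mem_univ s))
    (Finset.sup_le fun _ ht => (mem_Icc.1 (mem_filter.1 ht).1).2)

lemma card_filter_mem_dualSet (s : β) :
    #{t ∈ Icc 1 (∑ s, c s) | s ∈ dualSet F c B t} = c s := by
  have hlow : c s ≤ intervalTop F c B s := le_max_left _ _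
  have hup := intervalTop_le_sum (F := F) (c := c) (B := B) s
  have : {t ∈ Icc 1 (∑ s, c s) | s ∈ dualSet F c B t} =
      Ioc (intervalTop F c B s - c s) (intervalTop F c B s) := by
    ext t
    simp only [dualSet, mem_filter, mem_univ, true_and, mem_Icc, mem_Ioc]
    omega
  rw [this, Nat.card_Ioc]
  omega

namespace IsGreedyBase

open Classical in
lemma mem_dualSet (hG : IsGreedoid F) (hI : LocalInter F) (hLF : LocalForest F)
    (hB : IsGreedyBase F c B) (ht : 0 < t) (hq : q ∉ sublevel F c B t)
    (hqF : insert q (sublevel F c B t) ∈ F) : q ∈ dualSet F c B t := by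
  have hlater : ∀ {t'}, t ≤ t' → q ∉ sublevel F c B t' → insert q (sublevel F c B t') ∈ F →
      t' < t + c q := fun {t'} htt' hq' hqF' =>
    calc t' ≤ pathWeight F c (insert q (sublevel F c B t')) q :=
          hB.isContinuationBound t' q hq' hqF'
      _ ≤ pathWeight F c (insert q (sublevel F c B t)) q :=
          sum_le_sum_of_subset (pathIn_subset_pathIn hI hqF hqF'
            (insert_subset_insert q (sublevel_mono htt')) (mem_insert_self _ _))
      _ < t + c q :=
          pathWeight_insert_lt hG hI hLF (hB.sublevel_mem t) hqF ht fun w hw =>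
            (hB.pathWeight_sublevel hI hw).trans_lt (mem_filter.1 hw).2
  have htN : t ≤ ∑ s, c s :=
    (hB.isContinuationBound t q hq hqF).trans (pathWeight_le_sum F c _ q)
  simp only [dualSet, mem_filter, mem_univ, true_and]
  refine ⟨le_max_of_le_right
      (Finset.le_sup (f := id) (mem_filter.2 ⟨mem_Icc.2 ⟨ht, htN⟩, hq, hqF⟩)),
    max_lt (by omega) ((Finset.sup_lt_iff (Nat.bot_eq_zero ▸ by omega)).2 fun t' ht' => ?_)⟩
  obtain ⟨-, hq', hqF'⟩ := mem_filter.1 ht'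
  rcases lt_or_ge t' t with h | h
  · exact h.trans_le (Nat.le_add_right t (c q))
  · exact hlater h hq' hqF'

open Classical in
lemma intervalTop_le_pathWeight (hI : LocalInter F) (hB : IsGreedyBase F c B) (hz : z ∈ B) :
    intervalTop F c B z ≤ pathWeight F c B z := by
  refine max_le (single_le_sum (fun _ _ => Nat.zero_le _) (mem_pathIn hI hB.mem hz))
    (Finset.sup_le fun t ht => ?_)
  have hzt : z ∉ sublevel F c B t := (mem_filter.1 ht).2.1
  simp only [sublevel, mem_filter, not_and, not_lt] at hzt
  exact hzt hz

lemma grank_compl_dualSet (hG : IsGreedoid F) (hI : LocalInter F) (hLF : LocalForest F)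
    (hB : IsGreedyBase F c B) (ht : 0 < t) :
    grank F (univ \ dualSet F c B t) = #(sublevel F c B t) := by
  refine hG.grank_eq_card (hB.sublevel_mem t) (fun z hz => mem_sdiff.2 ⟨mem_univ z, ?_⟩)
    fun q hq hqX hqF => (mem_sdiff.1 hq).2 (hB.mem_dualSet hG hI hLF ht hqX hqF)
  obtain ⟨hzB, hzt⟩ := mem_filter.1 hz
  simp only [dualSet, mem_filter, mem_univ, true_and, not_and, not_lt]
  have := hB.intervalTop_le_pathWeight hI hzB
  omega

lemma grank_univ (hG : IsGreedoid F) (hB : IsGreedyBase F c B) : grank F univ = #B :=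
  hG.grank_eq_card hB.mem (subset_univ B) fun q _ hq => hB.maximal q hq

end IsGreedyBase

end Dual

section LinearProgram

variable {β : Type*} [DecidableEq β] [Fintype β]

lemma sum_card_fiber_mul {ι : Type*} (I : Finset ι) (U : ι → Finset β) (f : Finset β → ℝ) :
    ∑ V ∈ univ.powerset, (#{i ∈ I | U i = V} : ℝ) * f V = ∑ i ∈ I, f (U i) := by
  rw [← sum_fiberwise_of_maps_to (t := (univ : Finset β).powerset)
    fun i _ => mem_powerset.2 (subset_univ (U i))]
  refine sum_congr rfl fun V _ => ?_
  rw [sum_congr rfl fun i hi => congrArg f (mem_filter.1 hi).2, sum_const, nsmul_eq_mul]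

lemma sum_card_fiber_of_mem {ι : Type*} (I : Finset ι) (U : ι → Finset β) (s : β) :
    ∑ V ∈ univ.powerset.filter (fun V => s ∈ V), (#{i ∈ I | U i = V} : ℝ) = #{i ∈ I | s ∈ U i} := by
  have := sum_card_fiber_mul I U fun V => if s ∈ V then 1 else 0
  simpa [sum_filter] using this

lemma sum_mul_le_of_forall_le_sum {b : Finset β → ℝ} {x : β → ℝ}
    (hx : ∀ V, b V ≤ ∑ s ∈ V, x s) {y : Finset β → ℝ} (hy : ∀ V, 0 ≤ y V) {c : β → ℝ}
    (hyc : ∀ s, ∑ V ∈ univ.powerset.filter (fun V => s ∈ V), y V = c s) :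
    ∑ V ∈ univ.powerset, y V * b V ≤ ∑ s, c s * x s :=
  calc ∑ V ∈ univ.powerset, y V * b V
      ≤ ∑ V ∈ univ.powerset, ∑ s ∈ V, y V * x s :=
        sum_le_sum fun V _ => (mul_le_mul_of_nonneg_left (hx V) (hy V)).trans_eq (mul_sum _ _ _)
    _ = ∑ s, ∑ V ∈ univ.powerset.filter (fun V => s ∈ V), y V * x s :=
        sum_comm' fun V s => by simp
    _ = ∑ s, c s * x s := by simp only [← sum_mul, hyc]

/-- Otherwise raising `x s₀` keeps `x ≥ R ≥ b` feasible and sends the objective to `-∞`. -/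
lemma nonneg_of_bddBelow {b : Finset β → ℝ} {R : ℝ} (hR : 0 ≤ R) (hbR : ∀ V, b V ≤ R)
    (hb : b ∅ ≤ 0) {c : β → ℤ}
    (hbdd : ∃ m : ℝ, ∀ x : β → ℝ, (∀ V, b V ≤ ∑ s ∈ V, x s) → m ≤ ∑ s, (c s : ℝ) * x s)
    (s₀ : β) : 0 ≤ c s₀ := by
  obtain ⟨m, hm⟩ := hbdd
  by_contra! hneg
  set K := ∑ s, (c s : ℝ) * R
  set τ := |K - m| + 1
  set x : β → ℝ := fun s => R + if s = s₀ then τ else 0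
  have hxR : ∀ s, R ≤ x s := fun s => by
    simp only [x]
    split_ifs <;> linarith [abs_nonneg (K - m)]
  have hfeas : ∀ V, b V ≤ ∑ s ∈ V, x s := by
    intro V
    rcases V.eq_empty_or_nonempty with rfl | ⟨v, hv⟩
    · simpa using hb
    · exact (hbR V).trans ((hxR v).trans (single_le_sum (fun s _ => hR.trans (hxR s)) hv))
  have hval : ∑ s, (c s : ℝ) * x s = K + c s₀ * τ := by
    simp [x, K, mul_add, sum_add_distrib]
  have hc₀ : (c s₀ : ℝ) ≤ -1 := by exact_mod_cast (by omega : c s₀ ≤ -1)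
  have := hm x hfeas
  nlinarith [le_abs_self (K - m), abs_nonneg (K - m)]

end LinearProgram

theorem exists_nat_dual_eq_primal {β : Type*} [DecidableEq β] [Fintype β] {F : Set (Finset β)}
    (hG : IsGreedoid F) (hU : LocalUnion F) (hI : LocalInter F) (hLF : LocalForest F)
    (c : β → ℕ) :
    ∃ (x : β → ℝ) (y : Finset β → ℕ),
      (∀ V, (grank F univ : ℝ) - grank F (univ \ V) ≤ ∑ s ∈ V, x s) ∧
      (∀ s, ∑ V ∈ univ.powerset.filter (fun V => s ∈ V), (y V : ℝ) = c s) ∧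
      ∑ V ∈ univ.powerset, (y V : ℝ) * ((grank F univ : ℝ) - grank F (univ \ V)) =
        ∑ s, (c s : ℝ) * x s := by
  obtain ⟨B, hB⟩ := exists_isGreedyBase hG hU hI c
  refine ⟨shVec F B, fun V => #{t ∈ Icc 1 (∑ s, c s) | dualSet F c B t = V}, fun V => ?_,
    fun s => ?_, ?_⟩
  · rw [hB.grank_univ hG]
    exact card_sub_grank_le_sum_shVec hG hU hI hB.mem V
  · rw [sum_card_fiber_of_mem, card_filter_mem_dualSet]
  · rw [sum_card_fiber_mul, sum_mul_shVec hG hU hI hB.mem, ← sum_card_sub_card_sublevel]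
    refine sum_congr rfl fun t ht => ?_
    rw [hB.grank_univ hG, hB.grank_compl_dualSet hG hI hLF (mem_Icc.1 ht).1]

/-- Total dual integrality of the system `x(U) ≥ r(S) - r(S \ U)` for local
forest greedoids: for every integer `c` with finite (bounded-below) primal
minimum, the dual has an integer optimal solution. -/
theorem statement12 (F : Set (Finset α)) (hG : IsGreedoid F)
    (hU : LocalUnion F) (hI : LocalInter F) (hLF : LocalForest F)
    (c : α → ℤ)
    (hfin : ∃ m : ℝ, ∀ x : α → ℝ,
      (∀ U : Finset α,
        (grank F Finset.univ : ℝ) - (grank F (Finset.univ \ U) : ℝ) ≤ ∑ s ∈ U, x s) →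
      m ≤ ∑ s : α, (c s : ℝ) * x s) :
    ∃ y : Finset α → ℝ, (∀ U, ∃ k : ℤ, y U = k) ∧
      (∀ U, 0 ≤ y U) ∧
      (∀ s : α, ∑ U ∈ Finset.univ.powerset.filter (fun U => s ∈ U), y U = (c s : ℝ)) ∧
      (∀ y' : Finset α → ℝ, (∀ U, 0 ≤ y' U) →
        (∀ s : α, ∑ U ∈ Finset.univ.powerset.filter (fun U => s ∈ U), y' U = (c s : ℝ)) →
        ∑ U ∈ Finset.univ.powerset,
            y' U * ((grank F Finset.univ : ℝ) - (grank F (Finset.univ \ U) : ℝ)) ≤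
          ∑ U ∈ Finset.univ.powerset,
            y U * ((grank F Finset.univ : ℝ) - (grank F (Finset.univ \ U) : ℝ))) := by
  have hc : ∀ s, 0 ≤ c s := nonneg_of_bddBelow (Nat.cast_nonneg (grank F univ))
    (fun V => sub_le_self _ (Nat.cast_nonneg _)) (by simp) hfin
  obtain ⟨x, y, hx, hy, hobj⟩ := exists_nat_dual_eq_primal hG hU hI hLF fun s => (c s).toNat
  have hcast : ∀ s, (((c s).toNat : ℕ) : ℝ) = c s := fun s => by
    exact_mod_cast Int.toNat_of_nonneg (hc s)
  simp only [hcast] at hy hobj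
  refine ⟨fun V => y V, fun V => ⟨y V, by simp⟩, fun V => Nat.cast_nonneg _, hy,
    fun y' hy' hy'c => ?_⟩
  rw [hobj]
  exact sum_mul_le_of_forall_le_sum hx hy' hy'c
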